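/- arXiv:1803.03702 — 2 statements merged into one kernel-verified Lean document; each statement's English description precedes it below -/
import Mathlib

section
/- Let ρ, ρ′, C be real numbers with C > 0, let n and m be positive integers, and let b, d : ℕ → ℝ be nonnegative sequences with b(0) > 0 and d(0) > 0 such that for every real t > 0 the series ∑_{k=0}^∞ b(k)·e^{−2πtk/n} and ∑_{k=0}^∞ d(k)·e^{−2πtk/m} converge. If e^{−2πtρ′}·∑_{k=0}^∞ b(k)·e^{−2πtk/n} ≤ C·e^{−2πtρ}·∑_{k=0}^∞ d(k)·e^{−2πtk/m} for all t > 0, then ρ′ ≥ ρ, and if ρ′ = ρ then b(0) ≤ C·d(0). -/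
/-!
Both series are generalized Dirichlet series in `t`, so by dominated convergence (against their
values at `t = 1`) they tend to their constant terms `b 0` and `d 0` as `t → ∞`. Multiplying the
hypothesis by `exp (2πtρ')` compares the series `B`, `D` as `B t ≤ C * exp (2πt(ρ' - ρ)) * D t`:
if `ρ' < ρ` the right side tends to `0` while the left tends to `b 0 > 0`, and if `ρ' = ρ` the
limit gives `b 0 ≤ C * d 0`.
-/

open Real Filter Topology

theorem tendsto_tsum_mul_exp_neg_mul_atTop {a μ : ℕ → ℝ} (hμ₀ : μ 0 = 0)
    (hμ : ∀ k, k ≠ 0 → 0 < μ k) {t₀ : ℝ}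
    (hs : Summable fun k => a k * exp (-(t₀ * μ k))) :
    Tendsto (fun t => ∑' k, a k * exp (-(t * μ k))) atTop (𝓝 (a 0)) := by
  have hterm : ∀ k, Tendsto (fun t => a k * exp (-(t * μ k))) atTop
      (𝓝 (if k = 0 then a 0 else 0)) := by
    intro k
    split_ifs with hk
    · subst hk
      simp [hμ₀]
    · have h : Tendsto (fun t => -(t * μ k)) atTop atBot :=
        tendsto_neg_atTop_atBot.comp (tendsto_id.atTop_mul_const (hμ k hk))
      simpa using (tendsto_exp_atBot.comp h).const_mul (a k)
  have hbound : ∀ᶠ t in atTop, ∀ k, ‖a k * exp (-(t * μ k))‖ ≤ ‖a k * exp (-(t₀ * μ k))‖ := by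
    filter_upwards [eventually_ge_atTop t₀] with t ht k
    have hμk : 0 ≤ μ k := by
      rcases eq_or_ne k 0 with rfl | hk
      · exact hμ₀.ge
      · exact (hμ k hk).le
    simp only [norm_mul, norm_of_nonneg (exp_pos _).le]
    gcongr
  simpa using tendsto_tsum_of_dominated_convergence hs.norm hterm hbound

theorem tendsto_tsum_mul_exp_div_atTop {a : ℕ → ℝ} {n : ℕ} (hn : 0 < n) {t₀ : ℝ}
    (hs : Summable fun k : ℕ => a k * exp (-2 * π * t₀ * k / n)) :
    Tendsto (fun t : ℝ => ∑' k : ℕ, a k * exp (-2 * π * t * k / n)) atTop (𝓝 (a 0)) := by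
  have h := tendsto_tsum_mul_exp_neg_mul_atTop (μ := fun k => 2 * π * k / n) (by simp)
    (fun k hk => by have := Nat.pos_of_ne_zero hk; positivity) (t₀ := t₀)
    (by convert hs using 4; ring)
  convert h using 6
  ring

theorem stmt_4_general (ρ ρ' C : ℝ) (n m : ℕ) (hn : 0 < n) (hm : 0 < m)
    (b d : ℕ → ℝ) (hb0 : 0 < b 0)
    (hbs : ∀ t : ℝ, 0 < t → Summable fun k : ℕ => b k * Real.exp (-2 * π * t * k / n))
    (hds : ∀ t : ℝ, 0 < t → Summable fun k : ℕ => d k * Real.exp (-2 * π * t * k / m))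
    (hle : ∀ t : ℝ, 0 < t →
      Real.exp (-2 * π * t * ρ') * ∑' k : ℕ, b k * Real.exp (-2 * π * t * k / n) ≤
      C * (Real.exp (-2 * π * t * ρ) * ∑' k : ℕ, d k * Real.exp (-2 * π * t * k / m))) :
    ρ ≤ ρ' ∧ (ρ' = ρ → b 0 ≤ C * d 0) := by
  have hB := tendsto_tsum_mul_exp_div_atTop hn (hbs 1 one_pos)
  have hD := tendsto_tsum_mul_exp_div_atTop hm (hds 1 one_pos)
  have hcomp : ∀ᶠ t in atTop, ∑' k : ℕ, b k * exp (-2 * π * t * k / n) ≤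
      C * exp (2 * π * t * (ρ' - ρ)) * ∑' k : ℕ, d k * exp (-2 * π * t * k / m) := by
    filter_upwards [eventually_gt_atTop 0] with t ht
    have hshift : exp (-2 * π * t * ρ) = exp (2 * π * t * (ρ' - ρ)) * exp (-2 * π * t * ρ') := by
      rw [← exp_add]; ring_nf
    refine le_of_mul_le_mul_left ?_ (exp_pos (-2 * π * t * ρ'))
    calc _ ≤ _ := hle t ht
      _ = _ := by rw [hshift]; ring
  refine ⟨le_of_not_gt fun hlt => ?_, fun heq => ?_⟩
  · have hexp : Tendsto (fun t => exp (2 * π * t * (ρ' - ρ))) atTop (𝓝 0) :=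
      tendsto_exp_atBot.comp
        ((tendsto_id.const_mul_atTop two_pi_pos).atTop_mul_const_of_neg (sub_neg.2 hlt))
    have := le_of_tendsto_of_tendsto hB ((hexp.const_mul C).mul hD) hcomp
    simp only [mul_zero, zero_mul] at this
    exact this.not_gt hb0
  · simp only [heq, sub_self, mul_zero, exp_zero, mul_one] at hcomp
    exact le_of_tendsto_of_tendsto hB (hD.const_mul C) hcomp

/-- Comparison of two exponential series: if
`exp (-2πtρ') * ∑ b k * exp (-2πtk/n) ≤ C * exp (-2πtρ) * ∑ d k * exp (-2πtk/m)`
for all `t > 0`, where `b, d` are nonnegative with positive leading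
coefficients, then `ρ' ≥ ρ`, and `b 0 ≤ C * d 0` if `ρ' = ρ`. -/
theorem stmt_4 (ρ ρ' C : ℝ) (hC : 0 < C) (n m : ℕ) (hn : 0 < n) (hm : 0 < m)
    (b d : ℕ → ℝ) (hb : ∀ k, 0 ≤ b k) (hd : ∀ k, 0 ≤ d k)
    (hb0 : 0 < b 0) (hd0 : 0 < d 0)
    (hbs : ∀ t : ℝ, 0 < t → Summable fun k : ℕ => b k * Real.exp (-2 * π * t * k / n))
    (hds : ∀ t : ℝ, 0 < t → Summable fun k : ℕ => d k * Real.exp (-2 * π * t * k / m))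
    (hle : ∀ t : ℝ, 0 < t →
      Real.exp (-2 * π * t * ρ') * ∑' k : ℕ, b k * Real.exp (-2 * π * t * k / n) ≤
      C * (Real.exp (-2 * π * t * ρ) * ∑' k : ℕ, d k * Real.exp (-2 * π * t * k / m))) :
    ρ ≤ ρ' ∧ (ρ' = ρ → b 0 ≤ C * d 0) :=
  stmt_4_general ρ ρ' C n m hn hm b d hb0 hbs hds hle
end

section
/- Let c, ρ, ρ′ ∈ ℝ, let n be a positive integer, let λ be a nonzero complex number, and let a : ℕ → ℂ and d, b : ℕ → ℝ satisfy: |a(k)| ≤ d(k) and b(k) ≥ 0 for all k ∈ ℕ, d(0) > 0, and b(0) > 0. Assume that for every real t > 0 the series ∑_{k=0}^∞ d(k)·e^{−2πtk} and ∑_{k=0}^∞ b(k)·e^{−2πtk/n} converge, and that the following two identities hold for all real t > 0: (untwisted) e^{2π(c/24−ρ)/t}·∑_{k=0}^∞ d(k)·e^{−2πk/t} = e^{2πt(c/24−ρ)}·∑_{k=0}^∞ d(k)·e^{−2πtk}, and (twisted) e^{2π(c/24−ρ)/t}·∑_{k=0}^∞ a(k)·e^{−2πk/t} = λ·e^{2πt(c/24−ρ′)}·∑_{k=0}^∞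 b(k)·e^{−2πtk/n}. Then ρ′ ≥ ρ, and if ρ′ = ρ then |λ|·b(0) ≤ d(0). -/
/-!
Taking norms in the twisted identity, bounding `‖a k‖` by `d k` and then applying the untwisted
identity gives `‖λ‖ · B(t) · e^{2π(ρ - ρ')t} ≤ D(t)` for all `t > 0`, where `B(t) ≥ b 0` and
`D(t) = ∑ d k e^{-2πtk}`. By dominated convergence `D(t) → d 0` as `t → ∞`, so the left side
stays bounded, which forces `ρ ≤ ρ'`; when `ρ' = ρ`, passing to the limit gives `‖λ‖ · b 0 ≤ d 0`.
-/

open Real Filter Topology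

theorem tendsto_tsum_mul_exp_atTop {d : ℕ → ℝ} {t₀ : ℝ}
    (hs : Summable fun k : ℕ => ‖d k‖ * exp (-2 * π * t₀ * k)) :
    Tendsto (fun t : ℝ => ∑' k : ℕ, d k * exp (-2 * π * t * k)) atTop (𝓝 (d 0)) := by
  rw [← tsum_ite_eq 0 d]
  refine tendsto_tsum_of_dominated_convergence hs (fun k => ?_) ?_
  · rcases k with _ | k
    · simp
    · have hneg : -2 * π * (k + 1 : ℕ) < 0 :=
        mul_neg_of_neg_of_pos (by linarith [pi_pos]) (by positivity)
      have hlin : Tendsto (fun t : ℝ => -2 * π * t * (k + 1 : ℕ)) atTop atBot :=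
        (tendsto_id.const_mul_atTop_of_neg hneg).congr fun t => by simp only [id]; ring
      simpa using (tendsto_exp_atBot.comp hlin).const_mul (d (k + 1))
  · filter_upwards [eventually_ge_atTop t₀] with t ht k
    rw [norm_mul, norm_of_nonneg (exp_pos _).le]
    have hkt : 0 ≤ π * k * (t - t₀) :=
      mul_nonneg (mul_nonneg pi_pos.le k.cast_nonneg) (sub_nonneg.2 ht)
    exact mul_le_mul_of_nonneg_left (exp_le_exp.2 (by nlinarith)) (norm_nonneg _)

theorem norm_mul_tsum_mul_exp_le {c ρ ρ' t : ℝ} {n : ℕ} {lam : ℂ} {a : ℕ → ℂ} {d b : ℕ → ℝ}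
    (had : ∀ k, ‖a k‖ ≤ d k) (hb : ∀ k, 0 ≤ b k)
    (hds : Summable fun k : ℕ => d k * exp (-2 * π * k / t))
    (huntw : exp (2 * π * (c / 24 - ρ) / t) * ∑' k : ℕ, d k * exp (-2 * π * k / t) =
      exp (2 * π * t * (c / 24 - ρ)) * ∑' k : ℕ, d k * exp (-2 * π * t * k))
    (htw : (exp (2 * π * (c / 24 - ρ) / t) : ℂ) * ∑' k : ℕ, a k * (exp (-2 * π * k / t) : ℂ) =
      lam * (exp (2 * π * t * (c / 24 - ρ')) : ℂ) *
        ((∑' k : ℕ, b k * exp (-2 * π * t * k / n) : ℝ) : ℂ)) :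
    ‖lam‖ * (∑' k : ℕ, b k * exp (-2 * π * t * k / n)) * exp (2 * π * (ρ - ρ') * t) ≤
      ∑' k : ℕ, d k * exp (-2 * π * t * k) := by
  have hA : ‖∑' k : ℕ, a k * (exp (-2 * π * k / t) : ℂ)‖ ≤
      ∑' k : ℕ, d k * exp (-2 * π * k / t) :=
    tsum_of_norm_bounded hds.hasSum fun k => by
      rw [norm_mul, Complex.norm_real, norm_of_nonneg (exp_pos _).le]
      exact mul_le_mul_of_nonneg_right (had k) (exp_pos _).le
  have hB : 0 ≤ ∑' k : ℕ, b k * exp (-2 * π * t * k / n) :=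
    tsum_nonneg fun k => mul_nonneg (hb k) (exp_pos _).le
  have hnorm := congrArg norm htw
  simp only [norm_mul, Complex.norm_real, norm_of_nonneg (exp_pos _).le, norm_of_nonneg hB] at hnorm
  refine le_of_mul_le_mul_left ?_ (exp_pos (2 * π * t * (c / 24 - ρ)))
  calc exp (2 * π * t * (c / 24 - ρ)) *
        (‖lam‖ * (∑' k : ℕ, b k * exp (-2 * π * t * k / n)) * exp (2 * π * (ρ - ρ') * t))
      = ‖lam‖ * exp (2 * π * t * (c / 24 - ρ')) * ∑' k : ℕ, b k * exp (-2 * π * t * k / n) := by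
        rw [show 2 * π * t * (c / 24 - ρ') = 2 * π * t * (c / 24 - ρ) + 2 * π * (ρ - ρ') * t by ring,
          exp_add]
        ring
    _ = exp (2 * π * (c / 24 - ρ) / t) * ‖∑' k : ℕ, a k * (exp (-2 * π * k / t) : ℂ)‖ := hnorm.symm
    _ ≤ exp (2 * π * (c / 24 - ρ) / t) * ∑' k : ℕ, d k * exp (-2 * π * k / t) := by gcongr
    _ = _ := huntw

theorem nonpos_of_mul_exp_le_of_tendsto {f : ℝ → ℝ} {C L s : ℝ} (hC : 0 < C)
    (hf : Tendsto f atTop (𝓝 L)) (h : ∀ᶠ t in atTop, C * exp (s * t) ≤ f t) : s ≤ 0 := by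
  by_contra! hs
  have hexp : Tendsto (fun t => C * exp (s * t)) atTop atTop :=
    (tendsto_exp_atTop.comp (tendsto_id.const_mul_atTop hs)).const_mul_atTop hC
  exact not_tendsto_atTop_of_tendsto_nhds hf (tendsto_atTop_mono' _ h hexp)

theorem stmt_5_general (c ρ ρ' : ℝ) (n : ℕ) (lam : ℂ) (hlam : lam ≠ 0)
    (a : ℕ → ℂ) (d b : ℕ → ℝ)
    (had : ∀ k, ‖a k‖ ≤ d k) (hb : ∀ k, 0 ≤ b k)
    (hb0 : 0 < b 0)
    (hds : ∀ t : ℝ, 0 < t → Summable fun k : ℕ => d k * Real.exp (-2 * π * t * k))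
    (hbs : ∀ t : ℝ, 0 < t → Summable fun k : ℕ => b k * Real.exp (-2 * π * t * k / n))
    (huntw : ∀ t : ℝ, 0 < t →
      Real.exp (2 * π * (c / 24 - ρ) / t) *
          ∑' k : ℕ, d k * Real.exp (-2 * π * k / t) =
        Real.exp (2 * π * t * (c / 24 - ρ)) *
          ∑' k : ℕ, d k * Real.exp (-2 * π * t * k))
    (htw : ∀ t : ℝ, 0 < t →
      (Real.exp (2 * π * (c / 24 - ρ) / t) : ℂ) *
          ∑' k : ℕ, a k * (Real.exp (-2 * π * k / t) : ℂ) =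
        lam * (Real.exp (2 * π * t * (c / 24 - ρ')) : ℂ) *
          ((∑' k : ℕ, b k * Real.exp (-2 * π * t * k / n) : ℝ) : ℂ)) :
    ρ ≤ ρ' ∧ (ρ' = ρ → ‖lam‖ * b 0 ≤ d 0) := by
  have hd k : 0 ≤ d k := (norm_nonneg _).trans (had k)
  have hD := tendsto_tsum_mul_exp_atTop (t₀ := 1) <|
    (hds 1 one_pos).congr fun k => by rw [norm_of_nonneg (hd k)]
  have hbound : ∀ᶠ t in atTop, ‖lam‖ * b 0 * exp (2 * π * (ρ - ρ') * t) ≤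
      ∑' k : ℕ, d k * exp (-2 * π * t * k) := by
    filter_upwards [eventually_gt_atTop 0] with t ht
    have hB : b 0 ≤ ∑' k : ℕ, b k * exp (-2 * π * t * k / n) := by
      simpa using (hbs t ht).le_tsum 0 fun k _ => mul_nonneg (hb k) (exp_pos _).le
    have hdt : Summable fun k : ℕ => d k * exp (-2 * π * k / t) :=
      (hds t⁻¹ (inv_pos.2 ht)).congr fun k => by ring_nf
    calc ‖lam‖ * b 0 * exp (2 * π * (ρ - ρ') * t)
        ≤ ‖lam‖ * (∑' k : ℕ, b k * exp (-2 * π * t * k / n)) * exp (2 * π * (ρ - ρ') * t) := by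
          gcongr
      _ ≤ _ := norm_mul_tsum_mul_exp_le had hb hdt (huntw t ht) (htw t ht)
  refine ⟨?_, fun hρ => ?_⟩
  · have := nonpos_of_mul_exp_le_of_tendsto (mul_pos (norm_pos_iff.2 hlam) hb0) hD hbound
    nlinarith [pi_pos]
  · subst hρ
    exact ge_of_tendsto hD (hbound.mono fun t ht => by simpa using ht)

/-- The analytic core of the main theorem: given the untwisted and twisted
modular-invariance identities on the imaginary axis, the twisted conformal
weight `ρ'` satisfies `ρ' ≥ ρ`, and `|λ| * b 0 ≤ d 0` if `ρ' = ρ`. -/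
theorem stmt_5 (c ρ ρ' : ℝ) (n : ℕ) (hn : 0 < n) (lam : ℂ) (hlam : lam ≠ 0)
    (a : ℕ → ℂ) (d b : ℕ → ℝ)
    (had : ∀ k, ‖a k‖ ≤ d k) (hb : ∀ k, 0 ≤ b k)
    (hd0 : 0 < d 0) (hb0 : 0 < b 0)
    (hds : ∀ t : ℝ, 0 < t → Summable fun k : ℕ => d k * Real.exp (-2 * π * t * k))
    (hbs : ∀ t : ℝ, 0 < t → Summable fun k : ℕ => b k * Real.exp (-2 * π * t * k / n))
    (huntw : ∀ t : ℝ, 0 < t →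
      Real.exp (2 * π * (c / 24 - ρ) / t) *
          ∑' k : ℕ, d k * Real.exp (-2 * π * k / t) =
        Real.exp (2 * π * t * (c / 24 - ρ)) *
          ∑' k : ℕ, d k * Real.exp (-2 * π * t * k))
    (htw : ∀ t : ℝ, 0 < t →
      (Real.exp (2 * π * (c / 24 - ρ) / t) : ℂ) *
          ∑' k : ℕ, a k * (Real.exp (-2 * π * k / t) : ℂ) =
        lam * (Real.exp (2 * π * t * (c / 24 - ρ')) : ℂ) *
          ((∑' k : ℕ, b k * Real.exp (-2 * π * t * k / n) : ℝ) : ℂ)) :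
    ρ ≤ ρ' ∧ (ρ' = ρ → ‖lam‖ * b 0 ≤ d 0) :=
  stmt_5_general c ρ ρ' n lam hlam a d b had hb hb0 hds hbs huntw htw
end
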